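/- Let f and g be continuous functions on (0,∞) with g(t) > 0 for all t > 0, let μ be a positive, differentiable, strictly increasing function mapping (0,∞) onto (μ(0⁺),∞), and suppose F(x) = ∫_0^∞ f(t)·e^{−x·μ(t)} dt and G(x) = ∫_0^∞ g(t)·e^{−x·μ(t)} dt converge for every x > 0. Suppose there exists t* ∈ (0,∞) such that f/g is strictly increasing on (0,t*) and strictly decreasing on (t*,∞), and suppose the limit L = lim_{x→0⁺} ( (F′(x)/G′(x))·G(x) − F(x) ) exists. Then F/G is decreasing on (0,∞) if and only if L ≥ 0. -/

import Mathlib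

/-!
Write `𝓛 φ x = ∫_{t>0} φ t e^{-x μ t}`, so `F = 𝓛 f`, `G = 𝓛 g`, `F' = -𝓛 (f μ)` and
`G' = -𝓛 (g μ) < 0`. Since `(F/G)' = G' H / G²`, the ratio `F/G` decreases iff `H ≥ 0`.

The key fact is that `r = F'/G' = 𝓛 (f μ) / 𝓛 (g μ)` is quasiconcave. For a level `c`, the set
where `ψ = f - c g` is positive is an interval because `f/g` is unimodal, so
`ψ (μ - c₁) (c₂ - μ) ≥ 0` (or `ψ (μ - c₁) ≥ 0`) for suitable constants. Now `e^{c₂ x} 𝓛 ψ` has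
derivative `e^{c₂ x} W` with `W = 𝓛 (ψ (c₂ - μ))`, and `e^{c₁ x} W` is nonincreasing; hence
`𝓛 ψ = 𝓛 g (𝓛 f / 𝓛 g - c)` cannot have the sign pattern `+, -, +`, so `𝓛 f / 𝓛 g` never dips
below a level between two points above it. Apply this to `f μ, g μ`.

A quasiconcave `r` is nonincreasing on `[x, ∞)` or nondecreasing on `(0, x]`. With Cauchy's mean
value theorem, the first case gives `F x ≤ r x G x` after sending the other endpoint to `∞`
(where `F, G → 0`), i.e. `H x ≥ 0`; in the second case `H` is nondecreasing on `(0, x]`, so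
`H x ≥ L`.
-/

open Real Filter Set MeasureTheory Topology

section Quasiconcave

variable {β : Type*} [LinearOrder β] {s : Set ℝ} {f g : ℝ → β} {x y z : ℝ}

theorem QuasiconcaveOn.min_le (hf : QuasiconcaveOn ℝ s f) (hx : x ∈ s) (hz : z ∈ s)
    (hy : y ∈ Icc x z) : min (f x) (f z) ≤ f y :=
  ((convex_iff_ordConnected.1 (hf _)).out ⟨hx, min_le_left _ _⟩ ⟨hz, min_le_right _ _⟩ hy).2

theorem quasiconcaveOn_of_min_le (hs : s.OrdConnected)
    (h : ∀ x ∈ s, ∀ z ∈ s, ∀ y ∈ Icc x z, min (f x) (f z) ≤ f y) : QuasiconcaveOn ℝ s f :=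
  fun _ => convex_iff_ordConnected.2 ⟨fun x hx z hz y hy =>
    ⟨hs.out hx.1 hz.1 hy, (le_min hx.2 hz.2).trans (h x hx.1 z hz.1 y hy)⟩⟩

theorem QuasiconcaveOn.congr (hf : QuasiconcaveOn ℝ s f) (hfg : EqOn f g s) :
    QuasiconcaveOn ℝ s g := by
  intro r
  convert hf r using 1
  ext x
  exact and_congr_right fun hx => by rw [hfg hx]

theorem quasiconcaveOn_of_monotoneOn_of_antitoneOn (hs : s.OrdConnected) (c : ℝ)
    (h₁ : MonotoneOn f (s ∩ Iic c)) (h₂ : AntitoneOn f (s ∩ Ici c)) :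
    QuasiconcaveOn ℝ s f := by
  refine quasiconcaveOn_of_min_le hs fun x hx z hz y hy => ?_
  have hys : y ∈ s := hs.out hx hz hy
  rcases le_total y c with hyc | hcy
  · exact min_le_of_left_le (h₁ ⟨hx, hy.1.trans hyc⟩ ⟨hys, hyc⟩ hy.1)
  · exact min_le_of_right_le (h₂ ⟨hys, hcy⟩ ⟨hz, hcy.trans hy.2⟩ hy.2)

theorem quasiconcaveOn_Ioi_of_monotoneOn_of_antitoneOn {ρ : ℝ → ℝ} {a c : ℝ} (hac : a < c)
    (hc : ContinuousAt ρ c) (h₁ : MonotoneOn ρ (Ioo a c)) (h₂ : AntitoneOn ρ (Ioi c)) :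
    QuasiconcaveOn ℝ (Ioi a) ρ := by
  refine quasiconcaveOn_of_monotoneOn_of_antitoneOn ordConnected_Ioi c ?_ ?_
  · rw [Ioi_inter_Iic, ← Ioo_insert_right hac]
    refine h₁.insert_of_continuousWithinAt ?_ hc.continuousWithinAt
    exact mem_closure_iff_clusterPt.1 (by rw [closure_Ioo hac.ne]; exact ⟨hac.le, le_rfl⟩)
  · rw [inter_eq_right.2 (Ici_subset_Ioi.2 hac), ← Ioi_insert]
    have hcl : ClusterPt c (𝓟 (Ioi c)) :=
      mem_closure_iff_clusterPt.1 (by rw [closure_Ioi]; exact self_mem_Ici)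
    simpa using (h₂.neg.insert_of_continuousWithinAt hcl hc.neg.continuousWithinAt).neg

theorem QuasiconcaveOn.monotoneOn_of_lt (hf : QuasiconcaveOn ℝ s f) (hz : z ∈ s) (hyz : y ≤ z)
    (hlt : f y < f z) : MonotoneOn f (s ∩ Iic y) := by
  intro p hp q hq hpq
  have hpz : f p < f z := by
    by_contra! h
    exact (hf.min_le hp.1 hz ⟨hp.2, hyz⟩).not_gt (by rwa [min_eq_right h])
  simpa [min_eq_left hpz.le] using hf.min_le hp.1 hz ⟨hpq, hq.2.trans hyz⟩

end Quasiconcave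

theorem antitoneOn_of_hasDerivAt_nonpos {s : Set ℝ} (hs : IsOpen s) (hs' : Convex ℝ s)
    {f f' : ℝ → ℝ} (hf : ∀ x ∈ s, HasDerivAt f (f' x) x) (hf' : ∀ x ∈ s, f' x ≤ 0) :
    AntitoneOn f s :=
  antitoneOn_of_hasDerivWithinAt_nonpos hs'
    (fun x hx => (hf x hx).continuousAt.continuousWithinAt)
    (fun x hx => by rw [hs.interior_eq] at hx ⊢; exact (hf x hx).hasDerivWithinAt)
    (fun x hx => hf' x (hs.interior_eq ▸ hx))

/-- The paper's `H_{F,G}`, with the derivatives `F'`, `G'` passed explicitly. -/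
noncomputable def auxH (F G F' G' : ℝ → ℝ) (x : ℝ) : ℝ := F' x / G' x * G x - F x

section AuxiliaryFunction

variable {F G F' G' : ℝ → ℝ} {w x : ℝ}

theorem lt_of_hasDerivAt_neg (hwx : w < x) (hG : ∀ y ∈ Icc w x, HasDerivAt G (G' y) y)
    (hG' : ∀ y ∈ Ioo w x, G' y < 0) : G x < G w := by
  refine strictAntiOn_of_hasDerivWithinAt_neg (f' := G') (convex_Icc w x)
    (fun y hy => (hG y hy).continuousAt.continuousWithinAt) (fun y hy => ?_) (fun y hy => ?_)
    (left_mem_Icc.2 hwx.le) (right_mem_Icc.2 hwx.le) hwx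
  · rw [interior_Icc] at hy ⊢
    exact (hG y (Ioo_subset_Icc_self hy)).hasDerivWithinAt
  · rw [interior_Icc] at hy
    exact hG' y hy

theorem exists_sub_eq_ratio_deriv_mul_sub (hwx : w < x)
    (hF : ∀ y ∈ Icc w x, HasDerivAt F (F' y) y) (hG : ∀ y ∈ Icc w x, HasDerivAt G (G' y) y)
    (hG' : ∀ y ∈ Ioo w x, G' y ≠ 0) :
    ∃ c ∈ Ioo w x, F x - F w = F' c / G' c * (G x - G w) := by
  obtain ⟨c, hc, h⟩ := exists_ratio_hasDerivAt_eq_ratio_slope F F' hwx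
    (fun y hy => (hF y hy).continuousAt.continuousWithinAt)
    (fun y hy => hF y (Ioo_subset_Icc_self hy)) G G'
    (fun y hy => (hG y hy).continuousAt.continuousWithinAt)
    (fun y hy => hG y (Ioo_subset_Icc_self hy))
  refine ⟨c, hc, ?_⟩
  field_simp [hG' c hc]
  linarith

theorem auxH_le_of_monotoneOn (hwx : w < x)
    (hF : ∀ y ∈ Icc w x, HasDerivAt F (F' y) y) (hG : ∀ y ∈ Icc w x, HasDerivAt G (G' y) y)
    (hG' : ∀ y ∈ Ioo w x, G' y < 0) (hGx : 0 ≤ G x)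
    (hr : MonotoneOn (fun y => F' y / G' y) (Icc w x)) :
    auxH F G F' G' w ≤ auxH F G F' G' x := by
  obtain ⟨c, hc, hcauchy⟩ :=
    exists_sub_eq_ratio_deriv_mul_sub hwx hF hG fun y hy => (hG' y hy).ne
  have hGdec : G x - G w < 0 := sub_neg.2 (lt_of_hasDerivAt_neg hwx hG hG')
  have hrc : F' w / G' w ≤ F' c / G' c :=
    hr (left_mem_Icc.2 hwx.le) (Ioo_subset_Icc_self hc) hc.1.le
  have hrx : F' w / G' w ≤ F' x / G' x :=
    hr (left_mem_Icc.2 hwx.le) (right_mem_Icc.2 hwx.le) hwx.le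
  unfold auxH
  nlinarith [mul_le_mul_of_nonpos_right hrc hGdec.le, mul_nonneg (sub_nonneg.2 hrx) hGx]

theorem auxH_nonneg_of_antitoneOn (hF : ∀ y ∈ Ici x, HasDerivAt F (F' y) y)
    (hG : ∀ y ∈ Ici x, HasDerivAt G (G' y) y) (hG' : ∀ y ∈ Ioi x, G' y < 0)
    (hr : AntitoneOn (fun y => F' y / G' y) (Ici x))
    (hF₀ : Tendsto F atTop (𝓝 0)) (hG₀ : Tendsto G atTop (𝓝 0)) :
    0 ≤ auxH F G F' G' x := by
  have key : ∀ z, x < z → F x - F z ≤ F' x / G' x * (G x - G z) := by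
    intro z hxz
    have hFxz := fun y (hy : y ∈ Icc x z) => hF y hy.1
    have hGxz := fun y (hy : y ∈ Icc x z) => hG y hy.1
    have hG'xz := fun y (hy : y ∈ Ioo x z) => hG' y hy.1
    obtain ⟨c, hc, hcauchy⟩ :=
      exists_sub_eq_ratio_deriv_mul_sub hxz hFxz hGxz fun y hy => (hG'xz y hy).ne
    have hGdec : G z - G x < 0 := sub_neg.2 (lt_of_hasDerivAt_neg hxz hGxz hG'xz)
    have hrc : F' c / G' c ≤ F' x / G' x := hr self_mem_Ici (mem_Ici.2 hc.1.le) hc.1.le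
    nlinarith [mul_le_mul_of_nonpos_right hrc hGdec.le]
  have hlim := le_of_tendsto_of_tendsto (tendsto_const_nhds.sub hF₀)
    (tendsto_const_nhds.mul (tendsto_const_nhds.sub hG₀)) ((eventually_gt_atTop x).mono key)
  unfold auxH
  simp only [sub_zero] at hlim
  linarith

theorem antitoneOn_div_iff {s : Set ℝ} (hs : IsOpen s) (hs' : Convex ℝ s)
    (hF : ∀ x ∈ s, HasDerivAt F (F' x) x) (hG : ∀ x ∈ s, HasDerivAt G (G' x) x)
    (hGpos : ∀ x ∈ s, 0 < G x) (hG' : ∀ x ∈ s, G' x < 0) :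
    AntitoneOn (fun x => F x / G x) s ↔ ∀ x ∈ s, 0 ≤ auxH F G F' G' x := by
  have hderiv : ∀ x ∈ s, HasDerivAt (fun x => F x / G x)
      (G' x * auxH F G F' G' x / G x ^ 2) x := by
    intro x hx
    refine ((hF x hx).div (hG x hx) (hGpos x hx).ne').congr_deriv ?_
    unfold auxH
    field_simp [(hG' x hx).ne]
  have hsign : ∀ x ∈ s, G' x * auxH F G F' G' x / G x ^ 2 ≤ 0 ↔ 0 ≤ auxH F G F' G' x := by
    intro x hx
    rw [div_le_iff₀ (pow_pos (hGpos x hx) 2), zero_mul]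
    constructor <;> intro h <;> nlinarith [hG' x hx]
  constructor
  · intro hmono x hx
    have hnonpos := hmono.derivWithin_nonpos (x := x)
    rw [derivWithin_of_isOpen hs hx, (hderiv x hx).deriv] at hnonpos
    exact (hsign x hx).1 hnonpos
  · exact fun hH =>
      antitoneOn_of_hasDerivAt_nonpos hs hs' hderiv fun x hx => (hsign x hx).2 (hH x hx)

theorem forall_auxH_nonneg_iff {L : ℝ}
    (hF : ∀ x ∈ Ioi 0, HasDerivAt F (F' x) x) (hG : ∀ x ∈ Ioi 0, HasDerivAt G (G' x) x)
    (hGpos : ∀ x ∈ Ioi 0, 0 < G x) (hG' : ∀ x ∈ Ioi 0, G' x < 0)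
    (hr : QuasiconcaveOn ℝ (Ioi 0) (fun x => F' x / G' x))
    (hF₀ : Tendsto F atTop (𝓝 0)) (hG₀ : Tendsto G atTop (𝓝 0))
    (hL : Tendsto (auxH F G F' G') (𝓝[>] 0) (𝓝 L)) :
    (∀ x ∈ Ioi 0, 0 ≤ auxH F G F' G' x) ↔ 0 ≤ L := by
  refine ⟨fun h => ge_of_tendsto hL (eventually_nhdsWithin_of_forall h), fun hL₀ x hx => ?_⟩
  have hIci : Ici x ⊆ Ioi 0 := Ici_subset_Ioi.2 hx
  by_cases hanti : AntitoneOn (fun y => F' y / G' y) (Ici x)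
  · exact auxH_nonneg_of_antitoneOn (fun y hy => hF y (hIci hy)) (fun y hy => hG y (hIci hy))
      (fun y hy => hG' y (hIci (mem_Ici.2 hy.le))) hanti hF₀ hG₀
  obtain ⟨y, hy, z, hz, hyz, hlt⟩ :
      ∃ y ∈ Ici x, ∃ z ∈ Ici x, y ≤ z ∧ F' y / G' y < F' z / G' z := by
    simpa [AntitoneOn] using hanti
  have hmono := hr.monotoneOn_of_lt (hIci hz) hyz hlt
  refine hL₀.trans (le_of_tendsto hL ?_)
  filter_upwards [Ioo_mem_nhdsGT hx] with w hw
  have hsub : Icc w x ⊆ Ioi 0 := fun u hu => hw.1.trans_le hu.1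
  exact auxH_le_of_monotoneOn hw.2 (fun u hu => hF u (hsub hu)) (fun u hu => hG u (hsub hu))
    (fun u hu => hG' u (hsub (Ioo_subset_Icc_self hu))) (hGpos x hx).le
    (hmono.mono fun u hu => ⟨hsub hu, hu.2.trans hy⟩)

end AuxiliaryFunction

def LaplaceIntegrable (μ φ : ℝ → ℝ) : Prop :=
  ∀ x > (0 : ℝ), IntegrableOn (fun t => φ t * exp (-x * μ t)) (Ioi 0)

noncomputable def laplaceTransform (μ φ : ℝ → ℝ) (x : ℝ) : ℝ :=
  ∫ t in Ioi (0 : ℝ), φ t * exp (-x * μ t)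

theorem mul_exp_neg_mul_le_inv {c : ℝ} (hc : 0 < c) (u : ℝ) : u * exp (-c * u) ≤ c⁻¹ := by
  rw [neg_mul, exp_neg, ← div_eq_mul_inv, div_le_iff₀ (exp_pos _), inv_mul_eq_div,
    le_div_iff₀ hc]
  linarith [add_one_le_exp (c * u)]

section Laplace

variable {μ φ ψ : ℝ → ℝ} {x : ℝ}

theorem LaplaceIntegrable.const_mul (hφ : LaplaceIntegrable μ φ) (c : ℝ) :
    LaplaceIntegrable μ (fun t => c * φ t) := fun x hx =>
  IntegrableOn.congr_fun ((hφ x hx).const_mul c) (fun _ _ => (mul_assoc _ _ _).symm)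
    measurableSet_Ioi

theorem LaplaceIntegrable.sub (hφ : LaplaceIntegrable μ φ) (hψ : LaplaceIntegrable μ ψ) :
    LaplaceIntegrable μ (fun t => φ t - ψ t) := fun x hx =>
  ((hφ x hx).sub (hψ x hx)).congr_fun (fun _ _ => (sub_mul _ _ _).symm) measurableSet_Ioi

theorem LaplaceIntegrable.mul_exponent (hμc : ContinuousOn μ (Ioi 0))
    (hμpos : ∀ t ∈ Ioi (0 : ℝ), 0 < μ t) (hφ : LaplaceIntegrable μ φ) :
    LaplaceIntegrable μ (fun t => φ t * μ t) := fun x hx => by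
  have hx2 : 0 < x / 2 := half_pos hx
  have hbdd : IntegrableOn
      (fun t => μ t * exp (-(x / 2) * μ t) * (φ t * exp (-(x / 2) * μ t))) (Ioi 0) := by
    refine (hφ _ hx2).bdd_mul (c := (x / 2)⁻¹)
      ((hμc.mul (continuousOn_const.mul hμc).rexp).aestronglyMeasurable measurableSet_Ioi) ?_
    refine (ae_restrict_iff' measurableSet_Ioi).2 (ae_of_all _ fun t ht => ?_)
    rw [norm_of_nonneg (mul_nonneg (hμpos t ht).le (exp_pos _).le)]
    exact mul_exp_neg_mul_le_inv hx2 _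
  refine hbdd.congr_fun (fun t _ => ?_) measurableSet_Ioi
  rw [show -x * μ t = -(x / 2) * μ t + -(x / 2) * μ t by ring, exp_add]
  ring

theorem LaplaceIntegrable.mul_const_sub_exponent (hμc : ContinuousOn μ (Ioi 0))
    (hμpos : ∀ t ∈ Ioi (0 : ℝ), 0 < μ t) (hψ : LaplaceIntegrable μ ψ) (c : ℝ) :
    LaplaceIntegrable μ (fun t => ψ t * (c - μ t)) := fun x hx =>
  IntegrableOn.congr_fun (((hψ.const_mul c).sub (hψ.mul_exponent hμc hμpos)) x hx)
    (fun t _ => by ring) measurableSet_Ioi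

theorem laplaceTransform_const_mul (c : ℝ) :
    laplaceTransform μ (fun t => c * φ t) x = c * laplaceTransform μ φ x := by
  simp only [laplaceTransform, mul_assoc, integral_const_mul]

theorem laplaceTransform_sub (hφ : LaplaceIntegrable μ φ) (hψ : LaplaceIntegrable μ ψ)
    (hx : 0 < x) :
    laplaceTransform μ (fun t => φ t - ψ t) x
      = laplaceTransform μ φ x - laplaceTransform μ ψ x := by
  simp only [laplaceTransform, sub_mul]
  exact integral_sub (hφ x hx) (hψ x hx)

theorem laplaceTransform_mul_const_sub (hμc : ContinuousOn μ (Ioi 0))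
    (hμpos : ∀ t ∈ Ioi (0 : ℝ), 0 < μ t) (hψ : LaplaceIntegrable μ ψ) (c : ℝ) (hx : 0 < x) :
    laplaceTransform μ (fun t => ψ t * (c - μ t)) x
      = c * laplaceTransform μ ψ x - laplaceTransform μ (fun t => ψ t * μ t) x := by
  rw [← laplaceTransform_const_mul,
    ← laplaceTransform_sub (hψ.const_mul c) (hψ.mul_exponent hμc hμpos) hx]
  simp only [mul_sub, mul_comm]

theorem laplaceTransform_nonpos (hφ : ∀ t ∈ Ioi (0 : ℝ), φ t ≤ 0) :
    laplaceTransform μ φ x ≤ 0 :=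
  setIntegral_nonpos measurableSet_Ioi fun t ht =>
    mul_nonpos_of_nonpos_of_nonneg (hφ t ht) (exp_pos _).le

theorem laplaceTransform_pos (hφpos : ∀ t ∈ Ioi (0 : ℝ), 0 < φ t) (hφ : LaplaceIntegrable μ φ)
    (hx : 0 < x) : 0 < laplaceTransform μ φ x := by
  have hnn : 0 ≤ᵐ[volume.restrict (Ioi 0)] fun t => φ t * exp (-x * μ t) :=
    (ae_restrict_iff' measurableSet_Ioi).2
      (ae_of_all _ fun t ht => mul_nonneg (hφpos t ht).le (exp_pos _).le)
  rw [laplaceTransform, setIntegral_pos_iff_support_of_nonneg_ae hnn (hφ x hx)]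
  have hsupp : Ioi 0 ⊆ Function.support (fun t => φ t * exp (-x * μ t)) ∩ Ioi 0 :=
    fun t ht => ⟨mul_ne_zero (hφpos t ht).ne' (exp_pos _).ne', ht⟩
  exact (by simp : (0 : ENNReal) < volume (Ioi (0 : ℝ))).trans_le (measure_mono hsupp)

theorem tendsto_laplaceTransform_atTop (hμpos : ∀ t ∈ Ioi (0 : ℝ), 0 < μ t)
    (hφ : LaplaceIntegrable μ φ) : Tendsto (laplaceTransform μ φ) atTop (𝓝 0) := by
  have h := tendsto_integral_filter_of_dominated_convergence
    (μ := volume.restrict (Ioi (0 : ℝ))) (l := atTop)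
    (F := fun x t => φ t * exp (-x * μ t)) (f := fun _ => 0)
    (fun t => ‖φ t * exp (-1 * μ t)‖) ?_ ?_ (hφ 1 one_pos).norm ?_
  · rwa [integral_zero] at h
  · exact (eventually_gt_atTop 0).mono fun x hx => (hφ x hx).aestronglyMeasurable
  · refine (eventually_ge_atTop 1).mono fun x hx => ?_
    refine (ae_restrict_iff' measurableSet_Ioi).2 (ae_of_all _ fun t ht => ?_)
    simp only [norm_mul, norm_of_nonneg (exp_pos _).le]
    gcongr
    nlinarith [hμpos t ht]
  · refine (ae_restrict_iff' measurableSet_Ioi).2 (ae_of_all _ fun t ht => ?_)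
    have hlin : Tendsto (fun x : ℝ => -x * μ t) atTop atBot :=
      tendsto_neg_atTop_atBot.atBot_mul_const (hμpos t ht)
    simpa using (tendsto_exp_atBot.comp hlin).const_mul (φ t)

theorem hasDerivAt_laplaceTransform (hμc : ContinuousOn μ (Ioi 0))
    (hμpos : ∀ t ∈ Ioi (0 : ℝ), 0 < μ t) (hφ : LaplaceIntegrable μ φ) (hx : 0 < x) :
    HasDerivAt (laplaceTransform μ φ) (-laplaceTransform μ (fun t => φ t * μ t) x) x := by
  have hx2 : 0 < x / 2 := half_pos hx
  have hφμ := hφ.mul_exponent hμc hμpos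
  have hball : ∀ y ∈ Metric.ball x (x / 2), x / 2 < y := fun y hy => by
    linarith [(abs_lt.1 (mem_ball_iff_norm.1 hy)).1]
  have key := hasDerivAt_integral_of_dominated_loc_of_deriv_le
    (μ := volume.restrict (Ioi (0 : ℝ))) (F := fun y t => φ t * exp (-y * μ t))
    (F' := fun y t => -(φ t * μ t * exp (-y * μ t)))
    (bound := fun t => ‖φ t * μ t * exp (-(x / 2) * μ t)‖)
    (Metric.ball_mem_nhds x hx2) ?_ (hφ x hx) (hφμ x hx).aestronglyMeasurable.neg ?_
    (hφμ _ hx2).norm ?_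
  · have h := key.2
    rwa [integral_neg] at h
  · filter_upwards [Metric.ball_mem_nhds x hx2] with y hy
    exact (hφ y (hx2.trans (hball y hy))).aestronglyMeasurable
  · refine (ae_restrict_iff' measurableSet_Ioi).2 (ae_of_all _ fun t ht y hy => ?_)
    rw [norm_neg, norm_mul, norm_mul (φ t * μ t), norm_of_nonneg (exp_pos _).le,
      norm_of_nonneg (exp_pos _).le]
    gcongr
    · exact (hμpos t ht).le
    · exact (hball y hy).le
  · refine ae_of_all _ fun t y _ => ?_
    have h : HasDerivAt (fun y : ℝ => -y * μ t) (-1 * μ t) y := (hasDerivAt_neg y).mul_const _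
    exact (h.exp.const_mul (φ t)).congr_deriv (by ring)

theorem hasDerivAt_exp_mul_laplaceTransform (hμc : ContinuousOn μ (Ioi 0))
    (hμpos : ∀ t ∈ Ioi (0 : ℝ), 0 < μ t) (hψ : LaplaceIntegrable μ ψ) (c : ℝ) (hx : 0 < x) :
    HasDerivAt (fun y => exp (c * y) * laplaceTransform μ ψ y)
      (exp (c * x) * laplaceTransform μ (fun t => ψ t * (c - μ t)) x) x := by
  rw [laplaceTransform_mul_const_sub hμc hμpos hψ c hx]
  have he : HasDerivAt (fun y => exp (c * y)) (exp (c * x) * c) x := by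
    simpa using ((hasDerivAt_id x).const_mul c).exp
  exact (he.mul (hasDerivAt_laplaceTransform hμc hμpos hψ hx)).congr_deriv (by ring)

theorem antitoneOn_exp_mul_laplaceTransform (hμc : ContinuousOn μ (Ioi 0))
    (hμpos : ∀ t ∈ Ioi (0 : ℝ), 0 < μ t) (hψ : LaplaceIntegrable μ ψ) {c : ℝ}
    (hsign : ∀ t ∈ Ioi (0 : ℝ), 0 ≤ ψ t * (μ t - c)) :
    AntitoneOn (fun x => exp (c * x) * laplaceTransform μ ψ x) (Ioi 0) := by
  refine antitoneOn_of_hasDerivAt_nonpos isOpen_Ioi (convex_Ioi 0)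
    (fun x hx => hasDerivAt_exp_mul_laplaceTransform hμc hμpos hψ c hx) fun x _ => ?_
  refine mul_nonpos_of_nonneg_of_nonpos (exp_pos _).le (laplaceTransform_nonpos fun t ht => ?_)
  linarith [hsign t ht, show ψ t * (c - μ t) = -(ψ t * (μ t - c)) by ring]

theorem laplaceTransform_neg_of_neg_of_pos (hμc : ContinuousOn μ (Ioi 0))
    (hμpos : ∀ t ∈ Ioi (0 : ℝ), 0 < μ t) (hψ : LaplaceIntegrable μ ψ) {c₁ c₂ : ℝ}
    (hsign : ∀ t ∈ Ioi (0 : ℝ), 0 ≤ ψ t * ((μ t - c₁) * (c₂ - μ t)))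
    {x₁ x₂ x₃ : ℝ} (hx₁ : 0 < x₁) (h₁₂ : x₁ < x₂) (h₂₃ : x₂ < x₃)
    (h₂ : laplaceTransform μ ψ x₂ < 0) (h₃ : 0 < laplaceTransform μ ψ x₃) :
    laplaceTransform μ ψ x₁ < 0 := by
  set T := laplaceTransform μ ψ
  set W := laplaceTransform μ (fun t => ψ t * (c₂ - μ t))
  have hV : ∀ x ∈ Ioi (0 : ℝ),
      HasDerivAt (fun y => exp (c₂ * y) * T y) (exp (c₂ * x) * W x) x :=
    fun x hx => hasDerivAt_exp_mul_laplaceTransform hμc hμpos hψ c₂ hx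
  have hVc : ∀ a b : ℝ, 0 < a → ContinuousOn (fun y => exp (c₂ * y) * T y) (Icc a b) :=
    fun a b ha y hy => (hV y (ha.trans_le hy.1)).continuousAt.continuousWithinAt
  have hE : AntitoneOn (fun x => exp (c₁ * x) * W x) (Ioi 0) :=
    antitoneOn_exp_mul_laplaceTransform hμc hμpos (hψ.mul_const_sub_exponent hμc hμpos c₂)
      fun t ht => show 0 ≤ ψ t * (c₂ - μ t) * (μ t - c₁) from (hsign t ht).trans_eq (by ring)
  -- `e^{c₂ x} T` rises on `[x₂, x₃]`, so `W > 0` somewhere there and hence on all of `(0, ξ]`.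
  obtain ⟨ξ, hξ, hslope₂₃⟩ := exists_hasDerivAt_eq_slope _ _ h₂₃ (hVc _ _ (hx₁.trans h₁₂))
    fun y hy => hV y (hx₁.trans (h₁₂.trans hy.1))
  have hWξ : 0 < W ξ := by
    refine pos_of_mul_pos_right (?_ : 0 < exp (c₂ * ξ) * W ξ) (exp_pos _).le
    rw [hslope₂₃]
    exact div_pos (by nlinarith [exp_pos (c₂ * x₂), exp_pos (c₂ * x₃)]) (sub_pos.2 h₂₃)
  have hW : ∀ y, 0 < y → y ≤ ξ → 0 < W y := fun y hy hyξ =>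
    pos_of_mul_pos_right ((mul_pos (exp_pos _) hWξ).trans_le
      (hE hy (hx₁.trans (h₁₂.trans hξ.1)) hyξ)) (exp_pos _).le
  obtain ⟨η, hη, hslope₁₂⟩ := exists_hasDerivAt_eq_slope _ _ h₁₂ (hVc _ _ hx₁)
    fun y hy => hV y (hx₁.trans hy.1)
  have hVη : 0 < exp (c₂ * η) * W η :=
    mul_pos (exp_pos _) (hW η (hx₁.trans hη.1) (hη.2.trans hξ.1).le)
  rw [hslope₁₂, div_pos_iff_of_pos_right (sub_pos.2 h₁₂), sub_pos] at hVη
  exact neg_of_mul_neg_right (hVη.trans (mul_neg_of_pos_of_neg (exp_pos _) h₂)) (exp_pos _).le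

end Laplace

section SignPattern

variable {μ ψ f g : ℝ → ℝ}

theorem exists_sign_pattern_of_ordConnected (hμpos : ∀ t ∈ Ioi (0 : ℝ), 0 < μ t)
    (hμ : MonotoneOn μ (Ioi 0)) (hS : {t ∈ Ioi (0 : ℝ) | 0 < ψ t}.OrdConnected) :
    (∃ c, ∀ t ∈ Ioi (0 : ℝ), 0 ≤ ψ t * (μ t - c)) ∨
      ∃ c₁ c₂, ∀ t ∈ Ioi (0 : ℝ), 0 ≤ ψ t * ((μ t - c₁) * (c₂ - μ t)) := by
  set S := {t ∈ Ioi (0 : ℝ) | 0 < ψ t}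
  have hψneg : ∀ t ∈ Ioi (0 : ℝ), t ∉ S → ψ t ≤ 0 :=
    fun t ht htS => not_lt.1 fun h => htS ⟨ht, h⟩
  rcases S.eq_empty_or_nonempty with hSe | hSne
  · refine Or.inr ⟨0, 0, fun t ht => ?_⟩
    have := hψneg t ht (hSe ▸ notMem_empty t)
    nlinarith [sq_nonneg (μ t)]
  have hbelow : BddBelow (μ '' S) := ⟨0, by rintro _ ⟨s, hs, rfl⟩; exact (hμpos s hs.1).le⟩
  set c₁ := sInf (μ '' S)
  have hc₁ : ∀ s ∈ S, c₁ ≤ μ s := fun s hs => csInf_le hbelow (mem_image_of_mem μ hs)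
  have hside : ∀ t ∈ Ioi (0 : ℝ), t ∉ S →
      (μ t ≤ c₁ ∧ ∀ s ∈ S, μ t ≤ μ s) ∨ ∀ s ∈ S, μ s ≤ μ t := by
    intro t ht htS
    by_cases hleft : ∀ s ∈ S, t ≤ s
    · have h := fun s hs => hμ ht hs.1 (hleft s hs)
      exact Or.inl ⟨le_csInf (hSne.image μ) (by rintro _ ⟨s, hs, rfl⟩; exact h s hs), h⟩
    push Not at hleft
    obtain ⟨s₀, hs₀, hs₀t⟩ := hleft
    refine Or.inr fun s hs => hμ hs.1 ht ?_
    by_contra! hts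
    exact htS (hS.out hs₀ hs ⟨hs₀t.le, hts.le⟩)
  obtain ⟨s₀, hs₀⟩ := hSne
  by_cases habove : BddAbove (μ '' S)
  · set c₂ := sSup (μ '' S)
    have hc₂ : ∀ s ∈ S, μ s ≤ c₂ := fun s hs => le_csSup habove (mem_image_of_mem μ hs)
    refine Or.inr ⟨c₁, c₂, fun t ht => ?_⟩
    by_cases htS : t ∈ S
    · exact mul_nonneg htS.2.le
        (mul_nonneg (sub_nonneg.2 (hc₁ t htS)) (sub_nonneg.2 (hc₂ t htS)))
    refine mul_nonneg_of_nonpos_of_nonpos (hψneg t ht htS) ?_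
    rcases hside t ht htS with ⟨hle, hleS⟩ | hgeS
    · exact mul_nonpos_of_nonpos_of_nonneg (sub_nonpos.2 hle)
        (sub_nonneg.2 ((hleS s₀ hs₀).trans (hc₂ s₀ hs₀)))
    · have hge : c₂ ≤ μ t := csSup_le ⟨_, mem_image_of_mem μ hs₀⟩
        (by rintro _ ⟨s, hs, rfl⟩; exact hgeS s hs)
      exact mul_nonpos_of_nonneg_of_nonpos (sub_nonneg.2 ((hc₁ s₀ hs₀).trans (hgeS s₀ hs₀)))
        (sub_nonpos.2 hge)
  · refine Or.inl ⟨c₁, fun t ht => ?_⟩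
    by_cases htS : t ∈ S
    · exact mul_nonneg htS.2.le (sub_nonneg.2 (hc₁ t htS))
    rcases hside t ht htS with ⟨hle, -⟩ | hgeS
    · exact mul_nonneg_of_nonpos_of_nonpos (hψneg t ht htS) (sub_nonpos.2 hle)
    · exact absurd ⟨μ t, by rintro _ ⟨s, hs, rfl⟩; exact hgeS s hs⟩ habove

theorem laplaceTransform_neg_of_ordConnected (hμc : ContinuousOn μ (Ioi 0))
    (hμpos : ∀ t ∈ Ioi (0 : ℝ), 0 < μ t) (hμ : MonotoneOn μ (Ioi 0))
    (hψ : LaplaceIntegrable μ ψ) (hS : {t ∈ Ioi (0 : ℝ) | 0 < ψ t}.OrdConnected)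
    {x₁ x₂ x₃ : ℝ} (hx₁ : 0 < x₁) (h₁₂ : x₁ < x₂) (h₂₃ : x₂ < x₃)
    (h₂ : laplaceTransform μ ψ x₂ < 0) (h₃ : 0 < laplaceTransform μ ψ x₃) :
    laplaceTransform μ ψ x₁ < 0 := by
  rcases exists_sign_pattern_of_ordConnected hμpos hμ hS with ⟨c, hc⟩ | ⟨c₁, c₂, hc⟩
  · have hanti := antitoneOn_exp_mul_laplaceTransform hμc hμpos hψ hc
      (hx₁.trans h₁₂) (hx₁.trans (h₁₂.trans h₂₃)) h₂₃.le
    exact absurd hanti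
      (not_le.2 ((mul_neg_of_pos_of_neg (exp_pos _) h₂).trans (mul_pos (exp_pos _) h₃)))
  · exact laplaceTransform_neg_of_neg_of_pos hμc hμpos hψ hc hx₁ h₁₂ h₂₃ h₂ h₃

theorem quasiconcaveOn_laplaceTransform_div (hμc : ContinuousOn μ (Ioi 0))
    (hμpos : ∀ t ∈ Ioi (0 : ℝ), 0 < μ t) (hμ : MonotoneOn μ (Ioi 0))
    (hf : LaplaceIntegrable μ f) (hg : LaplaceIntegrable μ g)
    (hgpos : ∀ t ∈ Ioi (0 : ℝ), 0 < g t) (hρ : QuasiconcaveOn ℝ (Ioi 0) (fun t => f t / g t)) :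
    QuasiconcaveOn ℝ (Ioi 0) (fun x => laplaceTransform μ f x / laplaceTransform μ g x) := by
  refine quasiconcaveOn_of_min_le ordConnected_Ioi fun x₁ hx₁ x₃ hx₃ x₂ hx₂ => ?_
  set R : ℝ → ℝ := fun x => laplaceTransform μ f x / laplaceTransform μ g x with hR
  change min (R x₁) (R x₃) ≤ R x₂
  by_contra! hlt
  have hLg : ∀ x ∈ Ioi (0 : ℝ), 0 < laplaceTransform μ g x :=
    fun x hx => laplaceTransform_pos hgpos hg hx
  obtain ⟨c, hc₂, hc⟩ := exists_between hlt
  obtain ⟨hc₁, hc₃⟩ := lt_min_iff.1 hc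
  have hT : ∀ x ∈ Ioi (0 : ℝ),
      laplaceTransform μ (fun t => f t - c * g t) x = laplaceTransform μ g x * (R x - c) := by
    intro x hx
    rw [laplaceTransform_sub hf (hg.const_mul c) hx, laplaceTransform_const_mul, hR]
    field_simp [(hLg x hx).ne']
  have hS : {t ∈ Ioi (0 : ℝ) | 0 < f t - c * g t} = {t ∈ Ioi (0 : ℝ) | c < f t / g t} := by
    ext t
    exact and_congr_right fun ht => by rw [lt_div_iff₀ (hgpos t ht), sub_pos]
  have h₁₂ : x₁ < x₂ := hx₂.1.lt_of_ne (by rintro rfl; linarith)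
  have h₂₃ : x₂ < x₃ := hx₂.2.lt_of_ne (by rintro rfl; linarith)
  have hx₂ : x₂ ∈ Ioi (0 : ℝ) := hx₁.trans h₁₂
  have hneg := laplaceTransform_neg_of_ordConnected hμc hμpos hμ (hf.sub (hg.const_mul c))
    (hS ▸ (hρ.convex_gt c).ordConnected) hx₁ h₁₂ h₂₃
    (by rw [hT x₂ hx₂]; exact mul_neg_of_pos_of_neg (hLg x₂ hx₂) (by linarith))
    (by rw [hT x₃ hx₃]; exact mul_pos (hLg x₃ hx₃) (by linarith))
  rw [hT x₁ hx₁] at hneg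
  exact hneg.not_gt (mul_pos (hLg x₁ hx₁) (by linarith))

end SignPattern

theorem stmt_7_general (f g μ : ℝ → ℝ)
    (hf : ContinuousOn f (Ioi 0)) (hg : ContinuousOn g (Ioi 0))
    (hgpos : ∀ t ∈ Ioi (0 : ℝ), 0 < g t)
    (hμpos : ∀ t ∈ Ioi (0 : ℝ), 0 < μ t)
    (hμdiff : DifferentiableOn ℝ μ (Ioi 0))
    (hμmono : StrictMonoOn μ (Ioi 0))
    (hfint : ∀ x > (0 : ℝ), IntegrableOn (fun t => f t * Real.exp (-x * μ t)) (Ioi 0))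
    (hgint : ∀ x > (0 : ℝ), IntegrableOn (fun t => g t * Real.exp (-x * μ t)) (Ioi 0))
    (F G : ℝ → ℝ)
    (hF : ∀ x, F x = ∫ t in Ioi (0 : ℝ), f t * Real.exp (-x * μ t))
    (hG : ∀ x, G x = ∫ t in Ioi (0 : ℝ), g t * Real.exp (-x * μ t))
    (tstar : ℝ) (htstar : tstar ∈ Ioi (0 : ℝ))
    (hinc : StrictMonoOn (fun t => f t / g t) (Ioo 0 tstar))
    (hdec : StrictAntiOn (fun t => f t / g t) (Ioi tstar))
    (L : ℝ)
    (hL : Tendsto (fun x => deriv F x / deriv G x * G x - F x)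
      (𝓝[>] (0 : ℝ)) (𝓝 L)) :
    AntitoneOn (fun x => F x / G x) (Ioi 0) ↔ 0 ≤ L := by
  have hμc : ContinuousOn μ (Ioi 0) := hμdiff.continuousOn
  have hfint : LaplaceIntegrable μ f := hfint
  have hgint : LaplaceIntegrable μ g := hgint
  obtain rfl : F = laplaceTransform μ f := funext hF
  obtain rfl : G = laplaceTransform μ g := funext hG
  set F' := fun x => -laplaceTransform μ (fun t => f t * μ t) x
  set G' := fun x => -laplaceTransform μ (fun t => g t * μ t) x
  have hF' : ∀ x ∈ Ioi (0 : ℝ), HasDerivAt (laplaceTransform μ f) (F' x) x :=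
    fun x hx => hasDerivAt_laplaceTransform hμc hμpos hfint hx
  have hG' : ∀ x ∈ Ioi (0 : ℝ), HasDerivAt (laplaceTransform μ g) (G' x) x :=
    fun x hx => hasDerivAt_laplaceTransform hμc hμpos hgint hx
  have hGpos : ∀ x ∈ Ioi (0 : ℝ), 0 < laplaceTransform μ g x :=
    fun x hx => laplaceTransform_pos hgpos hgint hx
  have hgμpos : ∀ t ∈ Ioi (0 : ℝ), 0 < g t * μ t := fun t ht => mul_pos (hgpos t ht) (hμpos t ht)
  have hG'neg : ∀ x ∈ Ioi (0 : ℝ), G' x < 0 := fun x hx =>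
    neg_neg_of_pos (laplaceTransform_pos hgμpos (hgint.mul_exponent hμc hμpos) hx)
  have hρ : QuasiconcaveOn ℝ (Ioi 0) (fun t => f t / g t) :=
    quasiconcaveOn_Ioi_of_monotoneOn_of_antitoneOn htstar
      ((hf.div hg fun t ht => (hgpos t ht).ne').continuousAt (Ioi_mem_nhds htstar))
      hinc.monotoneOn hdec.antitoneOn
  have hr : QuasiconcaveOn ℝ (Ioi 0) (fun x => F' x / G' x) := by
    simp only [F', G', neg_div_neg_eq]
    refine quasiconcaveOn_laplaceTransform_div hμc hμpos hμmono.monotoneOn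
      (hfint.mul_exponent hμc hμpos) (hgint.mul_exponent hμc hμpos) hgμpos
      (hρ.congr fun t ht => ?_)
    rw [mul_div_mul_right _ _ (hμpos t ht).ne']
  rw [antitoneOn_div_iff isOpen_Ioi (convex_Ioi 0) hF' hG' hGpos hG'neg]
  refine forall_auxH_nonneg_iff hF' hG' hGpos hG'neg hr
    (tendsto_laplaceTransform_atTop hμpos hfint) (tendsto_laplaceTransform_atTop hμpos hgint)
    (hL.congr' ?_)
  filter_upwards [self_mem_nhdsWithin] with x hx
  rw [auxH, (hF' x hx).deriv, (hG' x hx).deriv]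

theorem stmt_7 (f g μ : ℝ → ℝ)
    (hf : ContinuousOn f (Ioi 0)) (hg : ContinuousOn g (Ioi 0))
    (hgpos : ∀ t ∈ Ioi (0 : ℝ), 0 < g t)
    (hμpos : ∀ t ∈ Ioi (0 : ℝ), 0 < μ t)
    (hμdiff : DifferentiableOn ℝ μ (Ioi 0))
    (hμmono : StrictMonoOn μ (Ioi 0))
    (μ0 : ℝ) (hμ0 : Tendsto μ (𝓝[>] (0 : ℝ)) (𝓝 μ0))
    (hμonto : μ '' Ioi 0 = Ioi μ0)
    (hfint : ∀ x > (0 : ℝ), IntegrableOn (fun t => f t * Real.exp (-x * μ t)) (Ioi 0))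
    (hgint : ∀ x > (0 : ℝ), IntegrableOn (fun t => g t * Real.exp (-x * μ t)) (Ioi 0))
    (F G : ℝ → ℝ)
    (hF : ∀ x, F x = ∫ t in Ioi (0 : ℝ), f t * Real.exp (-x * μ t))
    (hG : ∀ x, G x = ∫ t in Ioi (0 : ℝ), g t * Real.exp (-x * μ t))
    (tstar : ℝ) (htstar : tstar ∈ Ioi (0 : ℝ))
    (hinc : StrictMonoOn (fun t => f t / g t) (Ioo 0 tstar))
    (hdec : StrictAntiOn (fun t => f t / g t) (Ioi tstar))
    (L : ℝ)
    (hL : Tendsto (fun x => deriv F x / deriv G x * G x - F x)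
      (𝓝[>] (0 : ℝ)) (𝓝 L)) :
    AntitoneOn (fun x => F x / G x) (Ioi 0) ↔ 0 ≤ L :=
  stmt_7_general f g μ hf hg hgpos hμpos hμdiff hμmono hfint hgint F G hF hG tstar htstar hinc hdec
    L hL
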